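/- arXiv:2207.07516 — 7 statements merged into one kernel-verified Lean document; each statement's English description precedes it below -/
import Mathlib

section
/- Let H(θ,p) = (1/2)(p²+θ²) + (κ/2)θ² with κ > −1, and let θ_0 ~ N(0, 1/(1+κ)) and p_0 ~ N(0,1) be independent. If the L-step map is [[cos(Lη), χ sin(Lη)],[−χ⁻¹ sin(Lη), cos(Lη)]] with χ ≠ 0, then E[H(θ_L,p_L) − H(θ_0,p_0)] = sin²(Lη) · ρ, where ρ = (1/2)(√(1+κ)·χ − 1/(√(1+κ)·χ))². In particular the expected energy error is nonnegative and bounded above by ρ. -/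
open MeasureTheory ProbabilityTheory Real

open scoped NNReal

/-! The energy error `H(θ_L, p_L) - H(θ₀, p₀)` is a quadratic form in `(θ₀, p₀)`. Under the
centered product Gaussian the cross term has mean zero, so only the diagonal coefficients survive,
weighted by the variances `1/(1+κ)` and `1`; using `cos² = 1 - sin²` their combination is
`sin²(Lη) · ρ`. -/

lemma integral_sq_gaussianReal (m : ℝ) (v : ℝ≥0) :
    ∫ x, x ^ 2 ∂gaussianReal m v = v + m ^ 2 := by
  have h := variance_eq_sub (memLp_id_gaussianReal (μ := m) (v := v) 2)
  simp only [variance_id_gaussianReal, id_eq, integral_id_gaussianReal] at h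
  rw [h]
  simp [Pi.pow_apply]

lemma integral_quadratic_prod {μ ν : Measure ℝ} [IsProbabilityMeasure μ] [IsProbabilityMeasure ν]
    (hμ : MemLp id 2 μ) (hν : MemLp id 2 ν) (a b c : ℝ) :
    ∫ z, (a * z.1 ^ 2 + b * (z.1 * z.2) + c * z.2 ^ 2) ∂μ.prod ν
      = a * ∫ x, x ^ 2 ∂μ + b * ((∫ x, x ∂μ) * ∫ y, y ∂ν) + c * ∫ y, y ^ 2 ∂ν := by
  have hμ1 : Integrable (fun x : ℝ ↦ x) μ := hμ.integrable one_le_two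
  have hν1 : Integrable (fun y : ℝ ↦ y) ν := hν.integrable one_le_two
  have hsq₁ : Integrable (fun z : ℝ × ℝ ↦ a * z.1 ^ 2) (μ.prod ν) :=
    (hμ.integrable_sq.comp_fst ν).const_mul a
  have hmul : Integrable (fun z : ℝ × ℝ ↦ b * (z.1 * z.2)) (μ.prod ν) :=
    (hμ1.mul_prod hν1).const_mul b
  have hsq₂ : Integrable (fun z : ℝ × ℝ ↦ c * z.2 ^ 2) (μ.prod ν) :=
    (hν.integrable_sq.comp_snd μ).const_mul c
  have hsum : Integrable (fun z : ℝ × ℝ ↦ a * z.1 ^ 2 + b * (z.1 * z.2)) (μ.prod ν) :=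
    hsq₁.add hmul
  rw [integral_add hsum hsq₂, integral_add hsq₁ hmul, integral_const_mul,
    integral_const_mul, integral_const_mul, integral_fun_fst (fun x : ℝ ↦ x ^ 2),
    integral_prod_mul (fun x : ℝ ↦ x) (fun y : ℝ ↦ y), integral_fun_snd (fun y : ℝ ↦ y ^ 2)]
  simp

/-- Expected energy error at stationarity. For the model Hamiltonian
`H(θ,p) = (1/2)(p²+θ²) + (κ/2)θ²` with `κ > -1`, with `θ₀ ~ N(0, 1/(1+κ))` and
`p₀ ~ N(0,1)` independent, and `(θ_L,p_L)` given by the `L`-step map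
`[[cos(Lη), χ sin(Lη)],[-χ⁻¹ sin(Lη), cos(Lη)]]` with `χ ≠ 0`, the expected energy
error equals `sin²(Lη)·ρ` where `ρ = (1/2)(√(1+κ)χ - 1/(√(1+κ)χ))²`; in particular
it is nonnegative and bounded above by `ρ`. -/
theorem stmt6 (κ : ℝ) (hκ : -1 < κ) (η χ : ℝ) (hχ : χ ≠ 0) (L : ℕ)
    (H : ℝ → ℝ → ℝ)
    (hH : ∀ θ p, H θ p = (1 / 2) * (p ^ 2 + θ ^ 2) + (κ / 2) * θ ^ 2)
    (θL pL : ℝ × ℝ → ℝ)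
    (hθL : ∀ x, θL x = Real.cos (L * η) * x.1 + χ * Real.sin (L * η) * x.2)
    (hpL : ∀ x, pL x = -χ⁻¹ * Real.sin (L * η) * x.1 + Real.cos (L * η) * x.2)
    (μ : Measure (ℝ × ℝ))
    (hμ : μ = (gaussianReal 0 (Real.toNNReal (1 / (1 + κ)))).prod (gaussianReal 0 1))
    (ρ : ℝ)
    (hρ : ρ = (1 / 2) * (Real.sqrt (1 + κ) * χ - 1 / (Real.sqrt (1 + κ) * χ)) ^ 2) :
    (∫ x, (H (θL x) (pL x) - H x.1 x.2) ∂μ) = Real.sin (L * η) ^ 2 * ρ ∧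
      0 ≤ (∫ x, (H (θL x) (pL x) - H x.1 x.2) ∂μ) ∧
      (∫ x, (H (θL x) (pL x) - H x.1 x.2) ∂μ) ≤ ρ := by
  have hk : 0 < 1 + κ := by linarith
  set c := cos (L * η)
  set s := sin (L * η)
  have hcs : c ^ 2 = 1 - s ^ 2 := cos_sq' _
  have herror : ∀ x : ℝ × ℝ, H (θL x) (pL x) - H x.1 x.2
      = ((1 + κ) / 2 * (c ^ 2 - 1) + s ^ 2 / (2 * χ ^ 2)) * x.1 ^ 2
        + ((1 + κ) * χ - χ⁻¹) * s * c * (x.1 * x.2)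
        + ((1 + κ) * χ ^ 2 * s ^ 2 + (c ^ 2 - 1)) / 2 * x.2 ^ 2 := by
    intro x
    rw [hH, hH, hθL, hpL]
    field_simp
    ring
  have hmean : ∫ x, (H (θL x) (pL x) - H x.1 x.2) ∂μ = s ^ 2 * ρ := by
    simp_rw [herror, hμ, integral_quadratic_prod (memLp_id_gaussianReal 2)
      (memLp_id_gaussianReal 2), integral_sq_gaussianReal, integral_id_gaussianReal,
      Real.coe_toNNReal _ (one_div_pos.2 hk).le, NNReal.coe_one]
    rw [hρ, hcs]
    field_simp
    rw [sq_sqrt hk.le]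
    ring
  have hρ0 : 0 ≤ ρ := hρ ▸ by positivity
  exact ⟨hmean, hmean ▸ by positivity, hmean ▸ mul_le_of_le_one_left hρ0 (sin_sq_le_one _)⟩
end

section
/- For −1 < κ < 0, the KRK integrator for the model Hamiltonian H = (1/2)(p²+θ²)+(κ/2)θ² is stable for all stepsizes 0 < ε < π, i.e. |cos ε − (εκ/2) sin ε| < 1 holds for all ε ∈ (0, π). -/
open Real

/-- For `-1 < κ < 0`, the KRK integrator for the model Hamiltonian
`H = (1/2)(p²+θ²) + (κ/2)θ²` is stable for all stepsizes `0 < ε < π`: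
`|cos ε - (εκ/2) sin ε| < 1` for all `ε ∈ (0, π)`. -/
theorem stmt10 (κ : ℝ) (hκ₁ : -1 < κ) (hκ₂ : κ < 0) :
    ∀ ε : ℝ, 0 < ε → ε < Real.pi →
      |Real.cos ε - (ε * κ / 2) * Real.sin ε| < 1 := by
  intro ε hε hεπ
  have hs : 0 < Real.sin ε := Real.sin_pos_of_pos_of_lt_pi hε hεπ
  have hc : -1 < Real.cos ε := by
    have := Real.cos_lt_cos_of_nonneg_of_le_pi (le_of_lt hε) le_rfl hεπ
    simpa using this
  have hcc : 0 < Real.cos (ε / 2) := by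
    apply Real.cos_pos_of_mem_Ioo
    constructor <;> [linarith [Real.pi_pos]; linarith]
  have htan : ε / 2 < Real.tan (ε / 2) := Real.lt_tan (by linarith) (by linarith)
  have hss : Real.sin ε = 2 * Real.sin (ε / 2) * Real.cos (ε / 2) := by
    rw [show ε = 2 * (ε / 2) by ring, Real.sin_two_mul]; ring_nf
  have hcs : Real.cos ε = 1 - 2 * Real.sin (ε / 2) ^ 2 := by
    nth_rewrite 1 [show ε = 2 * (ε / 2) by ring]
    rw [Real.cos_two_mul']
    nlinarith [Real.sin_sq_add_cos_sq (ε / 2)]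
  have htan' : Real.tan (ε / 2) = Real.sin (ε / 2) / Real.cos (ε / 2) := Real.tan_eq_sin_div_cos _
  have key : ε / 2 * Real.sin ε < 1 - Real.cos ε := by
    have h1 : ε / 2 * Real.sin ε < Real.tan (ε / 2) * Real.sin ε := by
      exact mul_lt_mul_of_pos_right htan hs
    have h2 : Real.tan (ε / 2) * Real.sin ε = 2 * Real.sin (ε / 2) ^ 2 := by
      rw [htan', hss]; field_simp
    linarith [hcs]
  rw [abs_lt]
  constructor
  · nlinarith [mul_pos (mul_pos hε (neg_pos.mpr hκ₂)) hs]
  · nlinarith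
end

section
/- For the KRK integrator applied to the model problem with κ > −1, κ ≠ 0, and stable stepsize ε, the rho function equals ρ^KRK(ε,κ) = κ² csc(ε) (−4ε cos ε + (4+κε²) sin ε)² / (8(1+κ)(4κε cos ε + (4−κ²ε²) sin ε)), where ρ(ε,κ) = (C + (1+κ)B)² / (2(1+κ)(1−A²)) with A, B, C the entries of the one-step KRK matrix. -/
open Real

/-- The ρ-function of the KRK integrator: with one-step matrix entries
`A = cos ε - (εκ/2) sin ε`, `B = sin ε`,
`C = (ε²κ²/4) sin ε - sin ε - εκ cos ε`, for `κ > -1`, `κ ≠ 0` and a stable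
stepsize (`|A| < 1`),
`ρ(ε,κ) = (C + (1+κ)B)²/(2(1+κ)(1-A²))` equals
`κ² csc(ε)(-4ε cos ε + (4+κε²) sin ε)² / (8(1+κ)(4κε cos ε + (4-κ²ε²) sin ε))`. -/
theorem stmt12 (κ ε : ℝ) (hκ : -1 < κ) (hκ0 : κ ≠ 0)
    (A B C : ℝ)
    (hA : A = Real.cos ε - (ε * κ / 2) * Real.sin ε)
    (hB : B = Real.sin ε)
    (hC : C = (ε ^ 2 * κ ^ 2 / 4) * Real.sin ε - Real.sin ε - ε * κ * Real.cos ε)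
    (hstab : |A| < 1) :
    (C + (1 + κ) * B) ^ 2 / (2 * (1 + κ) * (1 - A ^ 2)) =
      κ ^ 2 * (Real.sin ε)⁻¹ *
          (-4 * ε * Real.cos ε + (4 + κ * ε ^ 2) * Real.sin ε) ^ 2 /
        (8 * (1 + κ) *
          (4 * κ * ε * Real.cos ε + (4 - κ ^ 2 * ε ^ 2) * Real.sin ε)) := by
  have hpyth := Real.sin_sq_add_cos_sq ε
  have hA2 : A ^ 2 < 1 := by
    have h := abs_lt.mp hstab
    nlinarith [h.1, h.2]
  have h1 : (0 : ℝ) < 1 - A ^ 2 := by nlinarith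
  have hk1 : (0 : ℝ) < 1 + κ := by linarith
  have hs : Real.sin ε ≠ 0 := by
    intro h
    rw [hA, h] at h1
    nlinarith
  have hD : 4 * κ * ε * Real.cos ε + (4 - κ ^ 2 * ε ^ 2) * Real.sin ε ≠ 0 := by
    intro h
    have key : Real.sin ε * (4 * κ * ε * Real.cos ε + (4 - κ ^ 2 * ε ^ 2) * Real.sin ε)
        = 4 * (1 - A ^ 2) := by rw [hA]; nlinarith
    rw [h, mul_zero] at key
    linarith
  have hd1 : 2 * (1 + κ) * (1 - A ^ 2) ≠ 0 := by positivity
  have hd2 : Real.sin ε * (8 * (1 + κ) * (4 * κ * ε * Real.cos ε + (4 - κ ^ 2 * ε ^ 2) * Real.sin ε)) ≠ 0 := by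
    apply mul_ne_zero hs
    apply mul_ne_zero _ hD
    positivity
  have hr : κ ^ 2 * (Real.sin ε)⁻¹ *
          (-4 * ε * Real.cos ε + (4 + κ * ε ^ 2) * Real.sin ε) ^ 2 /
        (8 * (1 + κ) *
          (4 * κ * ε * Real.cos ε + (4 - κ ^ 2 * ε ^ 2) * Real.sin ε)) =
      κ ^ 2 * (-4 * ε * Real.cos ε + (4 + κ * ε ^ 2) * Real.sin ε) ^ 2 /
        (Real.sin ε * (8 * (1 + κ) *
          (4 * κ * ε * Real.cos ε + (4 - κ ^ 2 * ε ^ 2) * Real.sin ε))) := by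
    field_simp
  rw [hr, div_eq_div_iff hd1 hd2]
  subst hA hB hC
  linear_combination (2 * κ ^ 2 * (1 + κ) *
    (-4 * ε * Real.cos ε + (4 + κ * ε ^ 2) * Real.sin ε) ^ 2) * hpyth
end

section
/- For every κ > −1 with κ ≠ 0 and every ε ∈ (0, π) satisfying the stability condition (for κ > 0: εκ < 2 cot(ε/2)), one has ρ^RKR(ε,κ) < ρ^KRK(ε,κ), where ρ^RKR(ε,κ) = κ² csc(ε)(κε cos ε + 2 sin ε − (2+κ)ε)² / (2(1+κ)(4κε cos ε + (4−κ²ε²) sin ε)) and ρ^KRK(ε,κ) = κ² csc(ε)(−4ε cos ε + (4+κε²) sin ε)² / (8(1+κ)(4κε cos ε + (4−κ²ε²) sin ε)). -/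
open Real

set_option maxHeartbeats 1000000

/-- Main comparison theorem: for every `κ > -1`, `κ ≠ 0`, and `ε ∈ (0, π)`
satisfying the stability condition (for `κ > 0`: `εκ < 2 cot(ε/2)`),
`ρ^RKR(ε,κ) < ρ^KRK(ε,κ)`. -/
theorem stmt14 (κ ε : ℝ) (hκ : -1 < κ) (hκ0 : κ ≠ 0)
    (hε0 : 0 < ε) (hεπ : ε < Real.pi)
    (hstab : 0 < κ → ε * κ < 2 * Real.cot (ε / 2)) :
    κ ^ 2 * (Real.sin ε)⁻¹ *
        (κ * ε * Real.cos ε + 2 * Real.sin ε - (2 + κ) * ε) ^ 2 /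
      (2 * (1 + κ) *
        (4 * κ * ε * Real.cos ε + (4 - κ ^ 2 * ε ^ 2) * Real.sin ε)) <
    κ ^ 2 * (Real.sin ε)⁻¹ *
        (-4 * ε * Real.cos ε + (4 + κ * ε ^ 2) * Real.sin ε) ^ 2 /
      (8 * (1 + κ) *
        (4 * κ * ε * Real.cos ε + (4 - κ ^ 2 * ε ^ 2) * Real.sin ε)) := by
  have ht0 : 0 < ε / 2 := by linarith
  have htp : ε / 2 < π / 2 := by linarith
  set st := Real.sin (ε / 2) with hstdef
  set ct := Real.cos (ε / 2) with hctdef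
  have hst : 0 < st := Real.sin_pos_of_pos_of_lt_pi ht0 (by linarith [Real.pi_pos])
  have hct : 0 < ct := Real.cos_pos_of_mem_Ioo ⟨by linarith [Real.pi_pos], htp⟩
  have hpyth : st ^ 2 + ct ^ 2 = 1 := by
    rw [hstdef, hctdef]; exact Real.sin_sq_add_cos_sq _
  have htan : ε / 2 * ct < st := by
    have h := Real.lt_tan ht0 htp
    rw [Real.tan_eq_sin_div_cos] at h
    calc ε / 2 * ct < st / ct * ct := mul_lt_mul_of_pos_right h hct
      _ = st := div_mul_cancel₀ _ (ne_of_gt hct)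
  have hQ : 0 < 1 + κ := by linarith
  -- key positivity facts
  have hk1 : κ * (ε / 2 * st) < ct := by
    rcases le_or_gt κ 0 with hk | hk
    · have : κ * (ε / 2 * st) ≤ 0 :=
        mul_nonpos_of_nonpos_of_nonneg hk (by positivity)
      linarith
    · have h := hstab hk
      rw [Real.cot_eq_cos_div_sin] at h
      have h2 : ε * κ * st < 2 * (ct / st) * st := mul_lt_mul_of_pos_right h hst
      have hcs : 2 * (ct / st) * st = 2 * ct := by field_simp
      rw [hcs] at h2
      nlinarith [h2]
  have hk2 : 0 < st + κ * (ε / 2 * ct) := by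
    have h1 : 0 < (1 + κ) * (ε / 2 * ct) := by positivity
    nlinarith
  have hk3 : 0 < (2 + κ) * st + κ * (ε / 2 * ct) := by
    have h1 : 0 < (1 + κ) * (ε / 2 * ct) := by positivity
    have h2 : 0 < (1 + κ) * st := by positivity
    nlinarith
  have hk4 : 0 < 2 * ct - κ * (ε / 2 * st) := by linarith
  -- double angle rewrites
  have hS : Real.sin ε = 2 * st * ct := by
    rw [show ε = 2 * (ε / 2) by ring, Real.sin_two_mul]
  have hC : Real.cos ε = 1 - 2 * st ^ 2 := by
    rw [show ε = 2 * (ε / 2) by ring, Real.cos_two_mul]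
    rw [← hctdef]; nlinarith
  have hSpos : 0 < Real.sin ε := by rw [hS]; positivity
  have hSinv : 0 < (Real.sin ε)⁻¹ := inv_pos.mpr hSpos
  -- denominator positivity
  have hD : 0 < 4 * κ * ε * Real.cos ε + (4 - κ ^ 2 * ε ^ 2) * Real.sin ε := by
    rw [hS, hC]
    have e1 : 4 * κ * ε * (1 - 2 * st ^ 2) + (4 - κ ^ 2 * ε ^ 2) * (2 * st * ct)
        = 8 * ((ct - κ * (ε / 2 * st)) * (st + κ * (ε / 2 * ct)))
          + 4 * (κ * ε) * (1 - (st ^ 2 + ct ^ 2)) := by ring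
    rw [e1, hpyth]
    have := mul_pos (by linarith : (0:ℝ) < ct - κ * (ε / 2 * st)) hk2
    nlinarith
  -- A - 2B > 0
  have hAmB : 0 < (-4 * ε * Real.cos ε + (4 + κ * ε ^ 2) * Real.sin ε)
      - 2 * (κ * ε * Real.cos ε + 2 * Real.sin ε - (2 + κ) * ε) := by
    rw [hS, hC]
    have e1 : (-4 * ε * (1 - 2 * st ^ 2) + (4 + κ * ε ^ 2) * (2 * st * ct))
        - 2 * (κ * ε * (1 - 2 * st ^ 2) + 2 * (2 * st * ct) - (2 + κ) * ε)
        = 8 * (ε / 2 * st * ((2 + κ) * st + κ * (ε / 2 * ct))) := by ring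
    rw [e1]
    have := mul_pos (by positivity : (0:ℝ) < ε / 2 * st) hk3
    linarith
  -- A + 2B > 0
  have hApB : 0 < (-4 * ε * Real.cos ε + (4 + κ * ε ^ 2) * Real.sin ε)
      + 2 * (κ * ε * Real.cos ε + 2 * Real.sin ε - (2 + κ) * ε) := by
    rw [hS, hC]
    have e1 : (-4 * ε * (1 - 2 * st ^ 2) + (4 + κ * ε ^ 2) * (2 * st * ct))
        + 2 * (κ * ε * (1 - 2 * st ^ 2) + 2 * (2 * st * ct) - (2 + κ) * ε)
        = 8 * ((st - ε / 2 * ct) * (2 * ct - κ * (ε / 2 * st)))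
          - 8 * ε * (1 - (st ^ 2 + ct ^ 2)) := by ring
    rw [e1, hpyth]
    have := mul_pos (by linarith : (0:ℝ) < st - ε / 2 * ct) hk4
    nlinarith
  have hκ2 : 0 < κ ^ 2 := lt_of_le_of_ne (sq_nonneg κ) (Ne.symm (pow_ne_zero 2 hκ0))
  have hden1 : 0 < 2 * (1 + κ) *
      (4 * κ * ε * Real.cos ε + (4 - κ ^ 2 * ε ^ 2) * Real.sin ε) := by positivity
  have hden2 : 0 < 8 * (1 + κ) *
      (4 * κ * ε * Real.cos ε + (4 - κ ^ 2 * ε ^ 2) * Real.sin ε) := by positivity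
  rw [div_lt_div_iff₀ hden1 hden2]
  have key := mul_pos (mul_pos (mul_pos hκ2 hSinv) (mul_pos hQ hD))
      (mul_pos hAmB hApB)
  nlinarith [key]
end

section
/- For all ε ∈ (0, π) and κ > −1, the inequality 2(κε cos ε + 2 sin ε − (2+κ)ε) < −4ε cos ε + (4+κε²) sin ε holds; equivalently, −4 < κ(ε cot(ε/2) + 2). -/
open Real

/-- First key inequality in the proof that `ρ^RKR < ρ^KRK`: for all `ε ∈ (0, π)`
and `κ > -1`, `2(κε cos ε + 2 sin ε - (2+κ)ε) < -4ε cos ε + (4+κε²) sin ε`;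
equivalently `-4 < κ(ε cot(ε/2) + 2)`. -/
theorem stmt15 (κ ε : ℝ) (hκ : -1 < κ) (hε0 : 0 < ε) (hεπ : ε < Real.pi) :
    (2 * (κ * ε * Real.cos ε + 2 * Real.sin ε - (2 + κ) * ε) <
        -4 * ε * Real.cos ε + (4 + κ * ε ^ 2) * Real.sin ε) ∧
      -4 < κ * (ε * Real.cot (ε / 2) + 2) := by
  have hx0 : 0 < ε / 2 := by linarith
  have hx2 : ε / 2 < Real.pi / 2 := by linarith
  have hs : 0 < Real.sin (ε / 2) :=
    Real.sin_pos_of_pos_of_lt_pi hx0 (by linarith [Real.pi_pos])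
  have hc : 0 < Real.cos (ε / 2) := Real.cos_pos_of_mem_Ioo ⟨by linarith, hx2⟩
  have htan : ε / 2 < Real.tan (ε / 2) := Real.lt_tan hx0 hx2
  have hkey : ε / 2 * Real.cos (ε / 2) < Real.sin (ε / 2) := by
    rw [Real.tan_eq_sin_div_cos, lt_div_iff₀ hc] at htan
    linarith
  have hεeq : ε = 2 * (ε / 2) := by ring
  have hcos : Real.cos ε = 2 * Real.cos (ε / 2) ^ 2 - 1 := by
    rw [hεeq, mul_div_cancel_left₀ _ (two_ne_zero' ℝ), Real.cos_two_mul]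
  have hsin : Real.sin ε = 2 * Real.sin (ε / 2) * Real.cos (ε / 2) := by
    rw [hεeq, mul_div_cancel_left₀ _ (two_ne_zero' ℝ), Real.sin_two_mul]
  have hpyth : Real.sin (ε / 2) ^ 2 + Real.cos (ε / 2) ^ 2 = 1 :=
    Real.sin_sq_add_cos_sq _
  set s := Real.sin (ε / 2)
  set c := Real.cos (ε / 2)
  have hcot : Real.cot (ε / 2) = c / s := Real.cot_eq_cos_div_sin _
  -- t := ε * cot(ε/2) + 2 lies in (2, 4)
  have ht1 : 0 < ε * (c / s) := by positivity
  have ht2 : ε * (c / s) < 2 := by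
    rw [← mul_div_assoc, div_lt_iff₀ hs]
    linarith
  constructor
  · have hpos : 0 < ε * c + 2 * s := by positivity
    have h2 : 0 < 4 * s + κ * (ε * c + 2 * s) := by
      nlinarith [mul_pos (show (0:ℝ) < 1 + κ by linarith) hpos, hkey]
    have h3 : ε * c ^ 2 = ε * (1 - s ^ 2) := by rw [show c ^ 2 = 1 - s ^ 2 by linarith]
    have h4 : κ * ε * c ^ 2 = κ * ε * (1 - s ^ 2) := by
      rw [show c ^ 2 = 1 - s ^ 2 by linarith]
    rw [hcos, hsin]
    nlinarith [mul_pos (mul_pos hε0 hs) h2, h3, h4]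
  · rw [hcot]
    nlinarith [ht1, ht2]
end

section
/- For ε ∈ (0, π) and κ ∈ ℝ, the inequality 4ε cos ε − (4+κε²) sin ε < 2(κε cos ε + 2 sin ε − (2+κ)ε) is equivalent (using 2 − ε cot(ε/2) > 0 on (0,π)) to κε < 4 cot(ε/2); hence it holds for every κ > 0 satisfying the stability condition εκ < 2 cot(ε/2), and for every κ ≤ 0. -/
open Real

/-- Second key inequality in the proof that `ρ^RKR < ρ^KRK`: for `ε ∈ (0, π)` and
`κ : ℝ`, the inequality `4ε cos ε - (4+κε²) sin ε < 2(κε cos ε + 2 sin ε - (2+κ)ε)`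
is equivalent to `κε < 4 cot(ε/2)` (using `2 - ε cot(ε/2) > 0` on `(0,π)`); hence it
holds for every `κ > 0` satisfying the stability condition `εκ < 2 cot(ε/2)`, and
for every `κ ≤ 0`. -/
theorem stmt17 (κ ε : ℝ) (hε0 : 0 < ε) (hεπ : ε < Real.pi) :
    ((4 * ε * Real.cos ε - (4 + κ * ε ^ 2) * Real.sin ε <
        2 * (κ * ε * Real.cos ε + 2 * Real.sin ε - (2 + κ) * ε)) ↔
      κ * ε < 4 * Real.cot (ε / 2)) ∧
    (0 < κ → ε * κ < 2 * Real.cot (ε / 2) →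
        4 * ε * Real.cos ε - (4 + κ * ε ^ 2) * Real.sin ε <
          2 * (κ * ε * Real.cos ε + 2 * Real.sin ε - (2 + κ) * ε)) ∧
    (κ ≤ 0 →
        4 * ε * Real.cos ε - (4 + κ * ε ^ 2) * Real.sin ε <
          2 * (κ * ε * Real.cos ε + 2 * Real.sin ε - (2 + κ) * ε)) := by
  set t := ε / 2 with ht
  have ht0 : 0 < t := by positivity
  have ht2 : t < Real.pi / 2 := by rw [ht]; linarith
  have hs : 0 < Real.sin t := Real.sin_pos_of_pos_of_lt_pi ht0 (by linarith [Real.pi_pos])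
  have hc : 0 < Real.cos t := Real.cos_pos_of_mem_Ioo ⟨by linarith [Real.pi_pos], ht2⟩
  have htan : t < Real.tan t := Real.lt_tan ht0 ht2
  have hcot : Real.cot t = Real.cos t / Real.sin t := Real.cot_eq_cos_div_sin t
  have hcotpos : 0 < Real.cot t := by rw [hcot]; positivity
  -- positivity of 2 sin t - ε cos t
  have hpos : 0 < 2 * Real.sin t - ε * Real.cos t := by
    have h1 : t * Real.cos t < Real.sin t := by
      have h2 := htan
      rw [Real.tan_eq_sin_div_cos] at h2
      exact (lt_div_iff₀ hc).mp h2
    have : ε = 2 * t := by rw [ht]; ring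
    rw [this]; linarith
  have hε2 : ε = 2 * t := by rw [ht]; ring
  have hsinε : Real.sin ε = 2 * Real.sin t * Real.cos t := by
    rw [hε2, Real.sin_two_mul]
  have hcosε : Real.cos ε = 2 * Real.cos t ^ 2 - 1 := by
    rw [hε2, Real.cos_two_mul]
  have hpy := Real.sin_sq_add_cos_sq t
  -- key identity
  have key : 2 * (κ * ε * Real.cos ε + 2 * Real.sin ε - (2 + κ) * ε) -
      (4 * ε * Real.cos ε - (4 + κ * ε ^ 2) * Real.sin ε) =
      2 * (2 * Real.sin t - ε * Real.cos t) * (4 * Real.cos t - κ * ε * Real.sin t) := by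
    rw [hsinε, hcosε]
    linear_combination (4 * κ * ε) * hpy
  have hiff : (4 * ε * Real.cos ε - (4 + κ * ε ^ 2) * Real.sin ε <
      2 * (κ * ε * Real.cos ε + 2 * Real.sin ε - (2 + κ) * ε)) ↔
      κ * ε < 4 * Real.cot t := by
    rw [hcot, show (4 : ℝ) * (Real.cos t / Real.sin t) = 4 * Real.cos t / Real.sin t by ring,
      lt_div_iff₀ hs]
    constructor
    · intro h
      have hD : 0 < 2 * (2 * Real.sin t - ε * Real.cos t) *
          (4 * Real.cos t - κ * ε * Real.sin t) := by linarith [key]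
      nlinarith
    · intro h
      nlinarith [key]
  refine ⟨hiff, ?_, ?_⟩
  · intro hκ hstab
    rw [hiff]
    nlinarith
  · intro hκ
    rw [hiff]
    nlinarith [mul_nonpos_of_nonpos_of_nonneg hκ hε0.le]
end

section
/- Let J be a symmetric positive definite d×d real matrix with eigendecomposition J = Zᵀ D Z (Z orthogonal, D diagonal positive). Then the matrix exponential exp(t·[[0, I],[−J, 0]]) equals [[Zᵀ,0],[0,Zᵀ]]·[[cos(t√D), D^(−1/2) sin(t√D)],[−D^(1/2) sin(t√D), cos(t√D)]]·[[Z,0],[0,Z]], where functions of √D act entrywise on the diagonal. -/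
open Matrix Real NormedSpace

/-!
Conjugating by `diag(Zᵀ, Zᵀ)` and then by `diag(1, √D)` turns the generator `t • [[0, 1], [-J, 0]]`
into `[[0, t√D], [-t√D, 0]]`. This is the image of the diagonal matrix `i t√D` under the
realification `A + iB ↦ [[A, B], [-B, A]]`, a continuous ring homomorphism which therefore commutes
with `exp`; the exponential of `i t√D` is the diagonal of `cos (t√D) + i sin (t√D)`.
-/

namespace Matrix

variable {n : Type*} [Fintype n] [DecidableEq n]

variable (n) in
noncomputable def complexToRealBlocks : Matrix n n ℂ →+* Matrix (n ⊕ n) (n ⊕ n) ℝ where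
  toFun M := fromBlocks (M.map Complex.re) (M.map Complex.im) (-M.map Complex.im)
    (M.map Complex.re)
  map_one' := by
    ext (i | i) (j | j) <;> simp [one_apply, apply_ite Complex.im]
  map_mul' M N := by
    ext (i | i) (j | j) <;>
      simp [mul_apply, Fintype.sum_sum_type, Complex.mul_re, Complex.mul_im, Complex.re_sum,
        Complex.im_sum, Finset.sum_add_distrib, Finset.sum_sub_distrib] <;> ring
  map_zero' := by ext (i | i) (j | j) <;> simp
  map_add' M N := by ext (i | i) (j | j) <;> simp [-neg_add_rev, neg_add]

theorem continuous_complexToRealBlocks : Continuous (complexToRealBlocks n) := by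
  refine continuous_matrix ?_
  rintro (i | i) (j | j)
  · exact Complex.continuous_re.comp (continuous_id.matrix_elem i j)
  · exact Complex.continuous_im.comp (continuous_id.matrix_elem i j)
  · exact (Complex.continuous_im.comp (continuous_id.matrix_elem i j)).neg
  · exact Complex.continuous_re.comp (continuous_id.matrix_elem i j)

theorem exp_complexToRealBlocks (M : Matrix n n ℂ) :
    exp (complexToRealBlocks n M) = complexToRealBlocks n (exp M) := by
  open scoped Norms.Operator in
  exact (map_exp (complexToRealBlocks n) continuous_complexToRealBlocks M).symm

theorem exp_fromBlocks_diagonal_skew (v : n → ℝ) :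
    exp (fromBlocks 0 (diagonal v) (-diagonal v) 0) =
      fromBlocks (diagonal (cos ∘ v)) (diagonal (sin ∘ v)) (-diagonal (sin ∘ v))
        (diagonal (cos ∘ v)) := by
  have hv : fromBlocks 0 (diagonal v) (-diagonal v) 0 =
      complexToRealBlocks n (diagonal fun i => v i * Complex.I) := by
    simp [complexToRealBlocks, diagonal_map]
  have hexp : exp (fun i => (v i : ℂ) * Complex.I) = fun i => Complex.exp (v i * Complex.I) := by
    funext i
    rw [Pi.coe_exp, Complex.exp_eq_exp_ℂ]
  rw [hv, exp_complexToRealBlocks, exp_diagonal, hexp]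
  simp [complexToRealBlocks, diagonal_map, Complex.exp_mul_I, Complex.cos_ofReal_re,
    Complex.sin_ofReal_re, Function.comp_def]

theorem exp_mul_mul_of_mul_eq_one {𝔸 : Type*} [NormedCommRing 𝔸] [NormedAlgebra ℚ 𝔸]
    [CompleteSpace 𝔸] {P Q : Matrix n n 𝔸} (hPQ : P * Q = 1) (A : Matrix n n 𝔸) :
    exp (P * A * Q) = P * exp A * Q :=
  exp_units_conj ⟨P, Q, hPQ, mul_eq_one_comm.mp hPQ⟩ A

theorem exp_smul_fromBlocks_zero_one_neg_orthogonal_conj {Z : Matrix n n ℝ} (hZ : Zᵀ * Z = 1)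
    {s : n → ℝ} (hs : ∀ i, s i ≠ 0) (t : ℝ) :
    exp (t • fromBlocks 0 1 (-(Zᵀ * diagonal (s * s) * Z)) 0) =
      fromBlocks Zᵀ 0 0 Zᵀ *
        fromBlocks (diagonal fun i => cos (t * s i)) (diagonal fun i => sin (t * s i) / s i)
          (diagonal fun i => -(s i * sin (t * s i))) (diagonal fun i => cos (t * s i)) *
        fromBlocks Z 0 0 Z := by
  set V := fromBlocks Zᵀ 0 0 Zᵀ
  set W := fromBlocks Z 0 0 Z
  set R := fromBlocks (1 : Matrix n n ℝ) 0 0 (diagonal s)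
  set R' := fromBlocks (1 : Matrix n n ℝ) 0 0 (diagonal s⁻¹)
  have hVW : V * W = 1 := by simp [V, W, fromBlocks_multiply, hZ]
  have hRR' : R * R' = 1 := by
    simp [R, R', ← diagonal_one, mul_inv_cancel₀ (hs _)]
  have hconj : t • fromBlocks 0 1 (-(Zᵀ * diagonal (s * s) * Z)) 0 =
      V * (R * fromBlocks 0 (diagonal (t • s)) (-diagonal (t • s)) 0 * R') * W := by
    have hmid : R * fromBlocks 0 (diagonal (t • s)) (-diagonal (t • s)) 0 * R' =
        t • fromBlocks 0 1 (-diagonal (s * s)) 0 := by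
      simp only [R, R', fromBlocks_multiply, fromBlocks_smul]
      simp [← diagonal_one, mul_inv_cancel₀ (hs _), -diagonal_neg, Pi.mul_def]
    rw [hmid]
    simp [V, W, fromBlocks_multiply, Matrix.mul_assoc, hZ, -diagonal_neg]
  have hrot : R * fromBlocks (diagonal (cos ∘ (t • s))) (diagonal (sin ∘ (t • s)))
      (-diagonal (sin ∘ (t • s))) (diagonal (cos ∘ (t • s))) * R' =
      fromBlocks (diagonal fun i => cos (t * s i)) (diagonal fun i => sin (t * s i) / s i)
          (diagonal fun i => -(s i * sin (t * s i))) (diagonal fun i => cos (t * s i)) := by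
    simp only [R, R', fromBlocks_multiply]
    simp [div_eq_mul_inv, mul_inv_cancel_right₀ (hs _), mul_comm (s _)]
  rw [hconj, exp_mul_mul_of_mul_eq_one hVW, exp_mul_mul_of_mul_eq_one hRR',
    exp_fromBlocks_diagonal_skew, hrot]

end Matrix

theorem stmt18_general (d : ℕ) (t : ℝ)
    (Z D J : Matrix (Fin d) (Fin d) ℝ) (dvec : Fin d → ℝ)
    (hdvec : ∀ i, 0 < dvec i) (hD : D = Matrix.diagonal dvec)
    (hZ : Zᵀ * Z = 1) (hJ : J = Zᵀ * D * Z) :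
    NormedSpace.exp (t • Matrix.fromBlocks (0 : Matrix (Fin d) (Fin d) ℝ) 1 (-J) 0) =
      Matrix.fromBlocks Zᵀ 0 0 Zᵀ *
        Matrix.fromBlocks
          (Matrix.diagonal fun i => Real.cos (t * Real.sqrt (dvec i)))
          (Matrix.diagonal fun i => Real.sin (t * Real.sqrt (dvec i)) / Real.sqrt (dvec i))
          (Matrix.diagonal fun i => -(Real.sqrt (dvec i) * Real.sin (t * Real.sqrt (dvec i))))
          (Matrix.diagonal fun i => Real.cos (t * Real.sqrt (dvec i))) *
        Matrix.fromBlocks Z 0 0 Z := by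
  have hsqrt : (fun i => √(dvec i)) * (fun i => √(dvec i)) = dvec :=
    funext fun i => Real.mul_self_sqrt (hdvec i).le
  have := exp_smul_fromBlocks_zero_one_neg_orthogonal_conj hZ
    (fun i => (Real.sqrt_pos.2 (hdvec i)).ne') t
  rwa [hsqrt, ← hD, ← hJ] at this

/-- For a symmetric positive definite `J = Zᵀ D Z` (with `Z` orthogonal and
`D = diagonal dvec` with positive diagonal entries), the matrix exponential of
`t·[[0, I],[-J, 0]]` equals
`[[Zᵀ,0],[0,Zᵀ]]·[[cos(t√D), D^(-1/2) sin(t√D)],[-D^(1/2) sin(t√D), cos(t√D)]]·[[Z,0],[0,Z]]`,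
with functions of `√D` acting entrywise on the diagonal. -/
theorem stmt18 (d : ℕ) (t : ℝ)
    (Z D J : Matrix (Fin d) (Fin d) ℝ) (dvec : Fin d → ℝ)
    (hdvec : ∀ i, 0 < dvec i) (hD : D = Matrix.diagonal dvec)
    (hZ : Zᵀ * Z = 1) (hJ : J = Zᵀ * D * Z) (hJsymm : J.IsSymm) :
    NormedSpace.exp (t • Matrix.fromBlocks (0 : Matrix (Fin d) (Fin d) ℝ) 1 (-J) 0) =
      Matrix.fromBlocks Zᵀ 0 0 Zᵀ *
        Matrix.fromBlocks
          (Matrix.diagonal fun i => Real.cos (t * Real.sqrt (dvec i)))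
          (Matrix.diagonal fun i => Real.sin (t * Real.sqrt (dvec i)) / Real.sqrt (dvec i))
          (Matrix.diagonal fun i => -(Real.sqrt (dvec i) * Real.sin (t * Real.sqrt (dvec i))))
          (Matrix.diagonal fun i => Real.cos (t * Real.sqrt (dvec i))) *
        Matrix.fromBlocks Z 0 0 Z :=
  stmt18_general d t Z D J dvec hdvec hD hZ hJ
end
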